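/- Let Θ be a measurable space, and for each θ ∈ Θ let (Z_t(θ))_{t≥0} and (Y_t(θ))_{t≥0} be real-valued processes adapted to a filtration (ℱ_t)_{t∈ℕ₀} on a probability space (Ω, 𝒜, P), with (θ, ω) ↦ Z_t(θ)(ω) jointly measurable for each t. Assume that for each θ: (Y_t(θ)) is a nonnegative supermartingale with Y_0(θ) ≤ 1, and 0 ≤ Z_t(θ) ≤ Y_t(θ) almost surely for all t. Let ν be a fixed (data-free) probability measure on Θ. Then for every δ ∈ (0,1), with probability at least 1−δ, simultaneously for every t ≥ 0 and every probability measure ρ on Θ: ∫_Θ log Z_t(θ) ρ(dθ) ≤ D_KL(ρ‖ν) + log(1/δ), where D_KL(ρ‖ν) = ∫ log(dρ/dν) dρ if ρ is absolutely continuous with respect to ν and +∞ otherwise, and log Z_t(θ) is interpreted as −∞ where Z_t(θ) = 0. -/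

import Mathlib

/-!
For each `θ` and all disjoint events `A k ∈ ℱ k`, optional stopping for the nonnegative
supermartingale `Y θ` gives `∑ k, E[Z θ k ; A k] ≤ E[Y θ 0] ≤ 1`. Unlike the supermartingale
property, this bound survives integration against `ν`, so it holds for the mixture
`M t = ∫ Z θ t dν`, which is a.e. equal to an adapted process. Choosing `A k` as the event that
`M` first reaches `1/δ` at time `k` gives Ville's inequality `P(∃ t, M t ≥ 1/δ) ≤ δ`. Off that
event, the Donsker–Varadhan inequality `∫ log Z t dρ ≤ KL(ρ‖ν) + log ∫ Z t dν` gives the bound.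
-/

open MeasureTheory Real Set Function

section Ville

variable {Ω : Type*} {m : MeasurableSpace Ω} {F : Filtration ℕ m} {P : Measure Ω}

/-- Equivalently `E[X τ ; τ < n] ≤ C` for every stopping time `τ` (take `A k = {τ = k}`). -/
def StoppedSumLE (F : Filtration ℕ m) (P : Measure Ω) (X : ℕ → Ω → ℝ) (C : ℝ) : Prop :=
  ∀ A : ℕ → Set Ω, (∀ k, MeasurableSet[F k] (A k)) → Pairwise (Disjoint on A) →
    ∀ n, ∑ k ∈ Finset.range n, ∫ ω in A k, X k ω ∂P ≤ C

lemma MeasureTheory.Supermartingale.sum_setIntegral_add_setIntegral_compl_le [IsFiniteMeasure P]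
    {Y : ℕ → Ω → ℝ} (hY : Supermartingale Y F P) {A : ℕ → Set Ω}
    (hA : ∀ k, MeasurableSet[F k] (A k)) (hdisj : Pairwise (Disjoint on A)) (n : ℕ) :
    ∑ k ∈ Finset.range n, ∫ ω in A k, Y k ω ∂P + ∫ ω in (⋃ k ∈ Finset.range n, A k)ᶜ, Y n ω ∂P
      ≤ ∫ ω, Y 0 ω ∂P := by
  induction n with
  | zero => simp
  | succ n ih =>
    have hB : MeasurableSet[F n] (⋃ k ∈ Finset.range (n + 1), A k)ᶜ :=
      (Finset.measurableSet_biUnion _ fun k hk =>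
        F.mono (Nat.lt_succ_iff.mp (Finset.mem_range.mp hk)) _ (hA k)).compl
    have hsub : A n ⊆ (⋃ k ∈ Finset.range n, A k)ᶜ := fun ω hω hω' => by
      obtain ⟨k, hk, hωk⟩ := mem_iUnion₂.1 hω'
      exact (hdisj (Finset.mem_range.1 hk).ne).ne_of_mem hωk hω rfl
    have hsplit : (⋃ k ∈ Finset.range n, A k)ᶜ = A n ∪ (⋃ k ∈ Finset.range (n + 1), A k)ᶜ := by
      rw [Finset.range_add_one, Finset.set_biUnion_insert, compl_union, inter_comm, ← sdiff_eq,
        union_sdiff_cancel hsub]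
    have hdisj' : Disjoint (A n) (⋃ k ∈ Finset.range (n + 1), A k)ᶜ :=
      disjoint_compl_right_iff_subset.mpr (subset_biUnion_of_mem (by simp))
    rw [hsplit, setIntegral_union hdisj' (F.le n _ hB) (hY.integrable n).integrableOn
      (hY.integrable n).integrableOn] at ih
    have hstep := hY.setIntegral_le (Nat.le_succ n) hB
    rw [Finset.sum_range_succ]
    linarith

lemma MeasureTheory.Supermartingale.stoppedSumLE [IsFiniteMeasure P] {Y : ℕ → Ω → ℝ}
    (hY : Supermartingale Y F P) (hnonneg : ∀ t ω, 0 ≤ Y t ω) :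
    StoppedSumLE F P Y (∫ ω, Y 0 ω ∂P) := fun _ hA hdisj n =>
  le_of_add_le_of_nonneg_left (hY.sum_setIntegral_add_setIntegral_compl_le hA hdisj n)
    (integral_nonneg fun ω => hnonneg n ω)

lemma StoppedSumLE.mono {X Y : ℕ → Ω → ℝ} {C C' : ℝ} (h : StoppedSumLE F P Y C)
    (hX : ∀ k, Integrable (X k) P) (hY : ∀ k, Integrable (Y k) P) (hXY : ∀ k, X k ≤ᵐ[P] Y k)
    (hC : C ≤ C') : StoppedSumLE F P X C' := fun A hA hdisj n =>
  (Finset.sum_le_sum fun k _ =>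
    setIntegral_mono_ae (hX k).integrableOn (hY k).integrableOn (hXY k)).trans
    ((h A hA hdisj n).trans hC)

lemma StoppedSumLE.integral_le {X : ℕ → Ω → ℝ} {C : ℝ} (h : StoppedSumLE F P X C) (t : ℕ) :
    ∫ ω, X t ω ∂P ≤ C := by
  have := h (fun k => if k = t then univ else ∅) (fun k => by split_ifs <;> simp)
    (fun i j hij => by dsimp only [onFun]; split_ifs <;> simp_all) (t + 1)
  rw [Finset.sum_eq_single_of_mem t (by simp) fun k _ hk => by simp [hk]] at this
  simpa using this

lemma StoppedSumLE.measure_exists_le [IsFiniteMeasure P] {X : ℕ → Ω → ℝ} {C c : ℝ}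
    (h : StoppedSumLE F P X C) (hX : Adapted F X) (hint : ∀ k, Integrable (X k) P) (hc : 0 < c) :
    P {ω | ∃ t, c ≤ X t ω} ≤ ENNReal.ofReal (C / c) := by
  set A := disjointed fun t => {ω | c ≤ X t ω} with hA_def
  have hA : ∀ k, MeasurableSet[F k] (A k) := fun k => by
    rw [hA_def, disjointed_eq_inter_compl]
    exact (measurableSet_le measurable_const (hX k)).inter
      (MeasurableSet.biInter (to_countable _) fun j hj => (measurableSet_le measurable_const
        ((hX j).mono (F.mono (le_of_lt hj)) le_rfl)).compl)
  have hsum : ∀ n, ∑ k ∈ Finset.range n, P (A k) ≤ ENNReal.ofReal (C / c) := fun n => by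
    have hreal : c * ∑ k ∈ Finset.range n, P.real (A k) ≤ C :=
      calc c * ∑ k ∈ Finset.range n, P.real (A k)
          = ∑ k ∈ Finset.range n, c * P.real (A k) := Finset.mul_sum _ _ _
        _ ≤ ∑ k ∈ Finset.range n, ∫ ω in A k, X k ω ∂P := Finset.sum_le_sum fun k _ =>
            setIntegral_ge_of_const_le_real (F.le k _ (hA k)) (measure_ne_top _ _)
              (fun ω hω => disjointed_subset _ k hω) (hint k).integrableOn
        _ ≤ C := h A hA (disjoint_disjointed _) n
    rw [← ENNReal.ofReal_toReal (ENNReal.sum_ne_top.mpr fun k _ => measure_ne_top P (A k)),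
      ENNReal.toReal_sum fun k _ => measure_ne_top P (A k)]
    exact ENNReal.ofReal_le_ofReal ((le_div_iff₀' hc).mpr hreal)
  calc P {ω | ∃ t, c ≤ X t ω} = P (⋃ k, A k) := by
        rw [iUnion_disjointed]; congr 1; ext; simp
    _ = ∑' k, P (A k) := measure_iUnion (disjoint_disjointed _) fun k => F.le k _ (hA k)
    _ ≤ ENNReal.ofReal (C / c) := ENNReal.tsum_le_of_sum_range_le hsum

end Ville

section Mixture

variable {Ω Θ : Type*} [MeasurableSpace Θ] {m m₀ : MeasurableSpace Ω} {P : Measure Ω}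
  {ν : Measure Θ}

lemma integrable_uncurry_of_integral_norm_le [IsFiniteMeasure ν] [SFinite P] {W : Θ → Ω → ℝ}
    {C : ℝ} (hW : AEStronglyMeasurable (uncurry W) (ν.prod P)) (hint : ∀ θ, Integrable (W θ) P)
    (hbd : ∀ θ, ∫ ω, ‖W θ ω‖ ∂P ≤ C) : Integrable (uncurry W) (ν.prod P) := by
  refine (integrable_prod_iff hW).2 ⟨ae_of_all _ hint,
    (integrable_const C).mono' hW.norm.integral_prod_right' (ae_of_all _ fun θ => ?_)⟩
  rw [Real.norm_of_nonneg (integral_nonneg fun _ => norm_nonneg _)]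
  exact hbd θ

lemma integral_integral_mul_swap [SFinite ν] [SFinite P] {W : Θ → Ω → ℝ} {k : Ω → ℝ} {C : ℝ}
    (hW : Integrable (uncurry W) (ν.prod P)) (hk : AEStronglyMeasurable k P)
    (hkC : ∀ᵐ ω ∂P, ‖k ω‖ ≤ C) :
    ∫ ω, (∫ θ, W θ ω ∂ν) * k ω ∂P = ∫ θ, ∫ ω, W θ ω * k ω ∂P ∂ν := by
  have hWk : Integrable (fun p : Θ × Ω => W p.1 p.2 * k p.2) (ν.prod P) :=
    hW.mul_bdd (hk.comp_quasiMeasurePreserving Measure.quasiMeasurePreserving_snd)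
      (Measure.quasiMeasurePreserving_snd.ae hkC)
  simp_rw [← integral_mul_const]
  exact integral_integral_swap hWk.swap

lemma integral_mul_condExp_of_stronglyMeasurable [IsFiniteMeasure P] (hm : m ≤ m₀)
    {f g : Ω → ℝ} (hf : StronglyMeasurable[m] f) (hg : Integrable g P)
    (hfg : Integrable (fun ω => f ω * g ω) P) :
    ∫ ω, f ω * g ω ∂P = ∫ ω, f ω * P[g|m] ω ∂P := by
  rw [← integral_condExp hm]
  exact integral_congr_ae (condExp_mul_of_stronglyMeasurable_left hf hfg hg)

lemma integral_mul_condExp_eq_integral_condExp_mul [IsFiniteMeasure P] (hm : m ≤ m₀)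
    {f g : Ω → ℝ} {R : ℝ} (hf : Integrable f P) (hg : Integrable g P)
    (hgR : ∀ᵐ ω ∂P, |g ω| ≤ R) :
    ∫ ω, f ω * P[g|m] ω ∂P = ∫ ω, P[f|m] ω * g ω ∂P := by
  have hcg : ∀ᵐ ω ∂P, |P[g|m] ω| ≤ R := ae_bdd_abs_condExp_of_ae_bdd_abs hgR
  calc ∫ ω, f ω * P[g|m] ω ∂P = ∫ ω, P[g|m] ω * f ω ∂P := by simp_rw [mul_comm]
    _ = ∫ ω, P[g|m] ω * P[f|m] ω ∂P :=
        integral_mul_condExp_of_stronglyMeasurable hm stronglyMeasurable_condExp hf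
          (hf.bdd_mul integrable_condExp.aestronglyMeasurable hcg)
    _ = ∫ ω, P[f|m] ω * P[g|m] ω ∂P := by simp_rw [mul_comm]
    _ = ∫ ω, P[f|m] ω * g ω ∂P :=
        (integral_mul_condExp_of_stronglyMeasurable hm stronglyMeasurable_condExp hg
          (integrable_condExp.mul_bdd hg.aestronglyMeasurable hgR)).symm

lemma integral_mul_indicator_one {f : Ω → ℝ} {s : Set Ω} (hs : MeasurableSet s) :
    ∫ ω, f ω * s.indicator 1 ω ∂P = ∫ ω in s, f ω ∂P := by
  simp_rw [← indicator_mul_right, Pi.one_apply, mul_one]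
  exact integral_indicator hs

/-- Joint measurability is only with respect to `m₀`, so the mixture need not be
`m`-measurable. -/
lemma integral_ae_eq_condExp_of_stronglyMeasurable [IsFiniteMeasure P] [SFinite ν]
    (hm : m ≤ m₀) {W : Θ → Ω → ℝ} (hW : Integrable (uncurry W) (ν.prod P))
    (hWm : ∀ θ, StronglyMeasurable[m] (W θ)) :
    (fun ω => ∫ θ, W θ ω ∂ν) =ᵐ[P] P[fun ω => ∫ θ, W θ ω ∂ν|m] := by
  set M := fun ω => ∫ θ, W θ ω ∂ν
  have hM : Integrable M P := hW.integral_prod_right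
  refine hM.ae_eq_of_forall_setIntegral_eq _ _ integrable_condExp fun s hs _ => ?_
  set g := s.indicator (1 : Ω → ℝ)
  have hg : Integrable g P := (integrable_const 1).indicator hs
  have hg1 : ∀ᵐ ω ∂P, |g ω| ≤ 1 := ae_of_all _ fun ω => by
    by_cases h : ω ∈ s <;> simp [g, h]
  calc ∫ ω in s, M ω ∂P = ∫ ω, M ω * g ω ∂P := (integral_mul_indicator_one hs).symm
    _ = ∫ θ, ∫ ω, W θ ω * g ω ∂P ∂ν :=
        integral_integral_mul_swap hW hg.aestronglyMeasurable hg1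
    _ = ∫ θ, ∫ ω, W θ ω * P[g|m] ω ∂P ∂ν := by
        refine integral_congr_ae ?_
        filter_upwards [hW.prod_right_ae] with θ hθ
        exact integral_mul_condExp_of_stronglyMeasurable hm (hWm θ) hg
          (hθ.mul_bdd hg.aestronglyMeasurable hg1)
    _ = ∫ ω, M ω * P[g|m] ω ∂P :=
        (integral_integral_mul_swap hW integrable_condExp.aestronglyMeasurable
          (ae_bdd_abs_condExp_of_ae_bdd_abs hg1)).symm
    _ = ∫ ω, P[M|m] ω * g ω ∂P := integral_mul_condExp_eq_integral_condExp_mul hm hM hg hg1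
    _ = ∫ ω in s, P[M|m] ω ∂P := integral_mul_indicator_one hs

end Mixture

section MixtureVille

variable {Ω Θ : Type*} [MeasurableSpace Θ] {m : MeasurableSpace Ω} {F : Filtration ℕ m}
  {P : Measure Ω} [IsFiniteMeasure P] {ν : Measure Θ} [IsProbabilityMeasure ν]

lemma StoppedSumLE.integral {W : Θ → ℕ → Ω → ℝ} {C : ℝ}
    (hW : ∀ k, Integrable (uncurry fun θ => W θ k) (ν.prod P))
    (h : ∀ θ, StoppedSumLE F P (W θ) C) :
    StoppedSumLE F P (fun k ω => ∫ θ, W θ k ω ∂ν) C := by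
  intro A hA hdisj n
  have hWA : ∀ k, Integrable (uncurry fun θ => W θ k) (ν.prod (P.restrict (A k))) := fun k =>
    (hW k).mono_measure (Measure.prod_mono le_rfl Measure.restrict_le_self)
  have hsec : ∀ k, Integrable (fun θ => ∫ ω in A k, W θ k ω ∂P) ν := fun k =>
    (hWA k).integral_prod_left
  calc ∑ k ∈ Finset.range n, ∫ ω in A k, ∫ θ, W θ k ω ∂ν ∂P
      = ∑ k ∈ Finset.range n, ∫ θ, ∫ ω in A k, W θ k ω ∂P ∂ν :=
        Finset.sum_congr rfl fun k _ => integral_integral_swap (hWA k).swap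
    _ = ∫ θ, ∑ k ∈ Finset.range n, ∫ ω in A k, W θ k ω ∂P ∂ν :=
        (integral_finsetSum _ fun k _ => hsec k).symm
    _ ≤ ∫ _, C ∂ν :=
        integral_mono (integrable_finsetSum _ fun k _ => hsec k) (integrable_const C)
          fun θ => h θ A hA hdisj n
    _ = C := by simp

lemma measure_exists_le_integral_le {W : Θ → ℕ → Ω → ℝ} {C c : ℝ}
    (hW : ∀ t, Integrable (uncurry fun θ => W θ t) (ν.prod P)) (hWad : ∀ θ, Adapted F (W θ))
    (h : ∀ θ, StoppedSumLE F P (W θ) C) (hc : 0 < c) :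
    P {ω | ∃ t, c ≤ ∫ θ, W θ t ω ∂ν} ≤ ENNReal.ofReal (C / c) := by
  set M := fun t ω => ∫ θ, W θ t ω ∂ν
  have hM : ∀ t, M t =ᵐ[P] P[M t|F t] := fun t =>
    integral_ae_eq_condExp_of_stronglyMeasurable (F.le t) (hW t) fun θ =>
      (hWad θ t).stronglyMeasurable
  have hN : StoppedSumLE F P (fun t => P[M t|F t]) C :=
    (StoppedSumLE.integral hW h).mono (fun _ => integrable_condExp)
      (fun t => (hW t).integral_prod_right) (fun t => (hM t).symm.le) le_rfl
  calc P {ω | ∃ t, c ≤ M t ω} ≤ P {ω | ∃ t, c ≤ P[M t|F t] ω} := by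
        refine measure_mono_ae ?_
        filter_upwards [ae_all_iff.2 hM] with ω hω
        rintro ⟨t, ht⟩
        exact ⟨t, hω t ▸ ht⟩
    _ ≤ ENNReal.ofReal (C / c) :=
        hN.measure_exists_le (fun _ => stronglyMeasurable_condExp.measurable)
          (fun _ => integrable_condExp) hc

end MixtureVille

section DonskerVaradhan

variable {Θ : Type*} [MeasurableSpace Θ]

lemma integral_pos_of_ae_pos {μ : Measure Θ} [NeZero μ] {φ : Θ → ℝ}
    (hpos : ∀ᵐ θ ∂μ, 0 < φ θ) (hφ : Integrable φ μ) : 0 < ∫ θ, φ θ ∂μ := by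
  rw [integral_pos_iff_support_of_nonneg_ae (hpos.mono fun _ h => h.le) hφ, pos_iff_ne_zero]
  intro h0
  obtain ⟨θ, hθ, hθ0⟩ := (hpos.and (μ.measure_support_eq_zero_iff.1 h0)).exists
  exact hθ.ne' hθ0

lemma integral_log_le_log_integral {μ : Measure Θ} [IsProbabilityMeasure μ] {φ : Θ → ℝ}
    (hpos : ∀ᵐ θ ∂μ, 0 < φ θ) (hφ : Integrable φ μ) (hlog : Integrable (fun θ => log (φ θ)) μ) :
    ∫ θ, log (φ θ) ∂μ ≤ log (∫ θ, φ θ ∂μ) := by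
  set I := ∫ θ, φ θ ∂μ
  have hI : 0 < I := integral_pos_of_ae_pos hpos hφ
  have htangent : ∀ᵐ θ ∂μ, log (φ θ) ≤ log I + (φ θ / I - 1) := by
    filter_upwards [hpos] with θ hθ
    have := log_le_sub_one_of_pos (div_pos hθ hI)
    rw [log_div hθ.ne' hI.ne'] at this
    linarith
  have hφI : Integrable (fun θ => φ θ / I - 1) μ := (hφ.div_const I).sub (integrable_const 1)
  calc ∫ θ, log (φ θ) ∂μ ≤ ∫ θ, (log I + (φ θ / I - 1)) ∂μ :=
        integral_mono_ae hlog ((integrable_const _).add hφI) htangent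
    _ = log I := by
        rw [integral_add (integrable_const _) hφI, integral_sub (hφ.div_const I)
          (integrable_const 1), integral_div, div_self hI.ne']
        simp

lemma abs_mul_div_le {a b : ℝ} (hb : 0 ≤ b) : |a * (b / a)| ≤ b := by
  rcases eq_or_ne a 0 with rfl | ha
  · simpa using hb
  · rwa [mul_div_cancel₀ _ ha, abs_of_nonneg]

section RnDeriv

variable {ρ ν : Measure Θ} [SigmaFinite ρ] [SigmaFinite ν] {f : Θ → ℝ}

lemma integrable_div_toReal_rnDeriv (hρν : ρ ≪ ν) (hf_nonneg : ∀ᵐ θ ∂ν, 0 ≤ f θ)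
    (hf : Integrable f ν) : Integrable (fun θ => f θ / (ρ.rnDeriv ν θ).toReal) ρ := by
  have hg := (Measure.measurable_rnDeriv ρ ν).ennreal_toReal.aestronglyMeasurable (μ := ν)
  exact (integrable_toReal_rnDeriv_mul_iff hρν).1 <|
    hf.mono' (hg.mul (hf.aestronglyMeasurable.div₀ hg)) (hf_nonneg.mono fun _ => abs_mul_div_le)

lemma integral_div_toReal_rnDeriv_le (hρν : ρ ≪ ν) (hf_nonneg : ∀ᵐ θ ∂ν, 0 ≤ f θ)
    (hf : Integrable f ν) : ∫ θ, f θ / (ρ.rnDeriv ν θ).toReal ∂ρ ≤ ∫ θ, f θ ∂ν := by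
  rw [← integral_toReal_rnDeriv_mul hρν]
  exact integral_mono_ae ((integrable_toReal_rnDeriv_mul_iff hρν).2
    (integrable_div_toReal_rnDeriv hρν hf_nonneg hf)) hf
    (hf_nonneg.mono fun _ h => (le_abs_self _).trans (abs_mul_div_le h))

end RnDeriv

lemma integral_log_le_integral_llr_add_log {ρ ν : Measure Θ} [IsProbabilityMeasure ρ]
    [SigmaFinite ν] (hρν : ρ ≪ ν) {f : Θ → ℝ} (hf_nonneg : ∀ᵐ θ ∂ν, 0 ≤ f θ)
    (hf_ne : ∀ᵐ θ ∂ρ, f θ ≠ 0) (hf : Integrable f ν)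
    (hlog : Integrable (fun θ => log (f θ)) ρ) (hllr : Integrable (llr ρ ν) ρ) {c : ℝ}
    (hc : ∫ θ, f θ ∂ν ≤ c) :
    ∫ θ, log (f θ) ∂ρ ≤ ∫ θ, llr ρ ν θ ∂ρ + log c := by
  set φ := fun θ => f θ / (ρ.rnDeriv ν θ).toReal
  have hφ : Integrable φ ρ := integrable_div_toReal_rnDeriv hρν hf_nonneg hf
  have hg_pos : ∀ᵐ θ ∂ρ, 0 < (ρ.rnDeriv ν θ).toReal := by
    filter_upwards [Measure.rnDeriv_pos hρν, hρν.ae_le (Measure.rnDeriv_lt_top ρ ν)]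
      with θ h0 htop
    exact ENNReal.toReal_pos h0.ne' htop.ne
  have hf_pos : ∀ᵐ θ ∂ρ, 0 < f θ := by
    filter_upwards [hρν.ae_le hf_nonneg, hf_ne] with θ h0 hne using h0.lt_of_ne' hne
  have hφ_pos : ∀ᵐ θ ∂ρ, 0 < φ θ := by
    filter_upwards [hf_pos, hg_pos] with θ hf hg using div_pos hf hg
  have hlogφ : (fun θ => log (φ θ)) =ᵐ[ρ] fun θ => log (f θ) - llr ρ ν θ := by
    filter_upwards [hf_pos, hg_pos] with θ hf hg
    exact log_div hf.ne' hg.ne'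
  have hφ_le : ∫ θ, φ θ ∂ρ ≤ c := (integral_div_toReal_rnDeriv_le hρν hf_nonneg hf).trans hc
  calc ∫ θ, log (f θ) ∂ρ = ∫ θ, log (φ θ) ∂ρ + ∫ θ, llr ρ ν θ ∂ρ := by
        rw [integral_congr_ae hlogφ, integral_sub hlog hllr]
        ring
    _ ≤ log (∫ θ, φ θ ∂ρ) + ∫ θ, llr ρ ν θ ∂ρ := by
        gcongr
        exact integral_log_le_log_integral hφ_pos hφ ((hlog.sub hllr).congr hlogφ.symm)
    _ ≤ ∫ θ, llr ρ ν θ ∂ρ + log c := by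
        linarith [log_le_log (integral_pos_of_ae_pos hφ_pos hφ) hφ_le]

end DonskerVaradhan

lemma ofReal_one_sub_le_measure_compl {Ω : Type*} [MeasurableSpace Ω] {P : Measure Ω}
    [IsProbabilityMeasure P] {s : Set Ω} {δ : ℝ} (hδ : 0 ≤ δ) (hs : P s ≤ ENNReal.ofReal δ) :
    ENNReal.ofReal (1 - δ) ≤ P sᶜ := by
  rw [ENNReal.ofReal_sub _ hδ, ENNReal.ofReal_one, tsub_le_iff_left, ← measure_univ (μ := P)]
  exact (measure_univ_le_add_compl s).trans (add_le_add_left hs _)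

/-- **Proposition (variational / PAC-Bayes template).**
Let `Θ` be a measurable space and, for each `θ ∈ Θ`, let `(Z_t(θ))` and `(Y_t(θ))` be
adapted real processes with `(θ,ω) ↦ Z_t(θ)(ω)` jointly measurable, `(Y_t(θ))` a
nonnegative supermartingale with `Y_0(θ) ≤ 1`, and `0 ≤ Z_t(θ) ≤ Y_t(θ)` a.s.
Let `ν` be a fixed (data-free) probability measure on `Θ`. Then for every `δ ∈ (0,1)`,
with probability at least `1−δ`, simultaneously for every `t ≥ 0` and every probability
measure `ρ` on `Θ`: `∫ log Z_t(θ) ρ(dθ) ≤ D_KL(ρ‖ν) + log(1/δ)`.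

(The KL divergence `D_KL(ρ‖ν) = ∫ log(dρ/dν) dρ` is `+∞` when `ρ` is not absolutely
continuous w.r.t. `ν` or `log(dρ/dν)` is not `ρ`-integrable, and `∫ log Z_t dρ = −∞` when
`Z_t = 0` on a set of positive `ρ`-measure or `log Z_t` is not `ρ`-integrable; in these
cases the inequality holds trivially, which is expressed below by guarding with the
corresponding hypotheses.) -/
theorem variational_template
    {Ω Θ : Type*} [m : MeasurableSpace Ω] [MeasurableSpace Θ]
    (P : Measure Ω) [IsProbabilityMeasure P]
    (F : Filtration ℕ m)
    (Z Y : Θ → ℕ → Ω → ℝ)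
    (hZmeas : ∀ t, Measurable fun p : Θ × Ω => Z p.1 t p.2)
    (hZadapted : ∀ θ, Adapted F (Z θ))
    (hY : ∀ θ, Supermartingale (Y θ) F P)
    (hYnonneg : ∀ θ t ω, 0 ≤ Y θ t ω)
    (hY0 : ∀ θ ω, Y θ 0 ω ≤ 1)
    (hZY : ∀ θ t, ∀ᵐ ω ∂P, 0 ≤ Z θ t ω ∧ Z θ t ω ≤ Y θ t ω)
    (ν : Measure Θ) [IsProbabilityMeasure ν]
    (δ : ℝ) (hδ : δ ∈ Set.Ioo (0 : ℝ) 1) :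
    ENNReal.ofReal (1 - δ) ≤
      P {ω | ∀ t : ℕ, ∀ ρ : Measure Θ, IsProbabilityMeasure ρ →
        ρ ≪ ν →
        (∀ᵐ θ ∂ρ, Z θ t ω ≠ 0) →
        Integrable (fun θ => Real.log (Z θ t ω)) ρ →
        Integrable (MeasureTheory.llr ρ ν) ρ →
        ∫ θ, Real.log (Z θ t ω) ∂ρ ≤
          ∫ θ, MeasureTheory.llr ρ ν θ ∂ρ + Real.log (1 / δ)} := by
  obtain ⟨hδ0, -⟩ := hδ
  have hZint : ∀ θ t, Integrable (Z θ t) P := fun θ t =>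
    ((hY θ).integrable t).mono' ((hZadapted θ t).mono (F.le t) le_rfl).aestronglyMeasurable
      ((hZY θ t).mono fun ω h => by rw [Real.norm_of_nonneg h.1]; exact h.2)
  have hZsum : ∀ θ, StoppedSumLE F P (Z θ) 1 := fun θ =>
    ((hY θ).stoppedSumLE (hYnonneg θ)).mono (hZint θ) (hY θ).integrable
      (fun t => (hZY θ t).mono fun _ h => h.2)
      ((integral_mono ((hY θ).integrable 0) (integrable_const 1) (hY0 θ)).trans (by simp))
  have hprod : ∀ t, Integrable (uncurry fun θ => Z θ t) (ν.prod P) := fun t =>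
    integrable_uncurry_of_integral_norm_le (hZmeas t).aestronglyMeasurable (fun θ => hZint θ t)
      fun θ => (integral_congr_ae ((hZY θ t).mono fun ω h => Real.norm_of_nonneg h.1)).trans_le
        ((hZsum θ).integral_le t)
  have hville : P {ω | ∃ t, 1 / δ ≤ ∫ θ, Z θ t ω ∂ν} ≤ ENNReal.ofReal δ := by
    simpa using measure_exists_le_integral_le hprod hZadapted hZsum (one_div_pos.2 hδ0)
  have hsec : ∀ᵐ ω ∂P, ∀ t, Integrable (fun θ => Z θ t ω) ν ∧ ∀ᵐ θ ∂ν, 0 ≤ Z θ t ω :=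
    ae_all_iff.2 fun t => (hprod t).prod_left_ae.and <|
      (Measure.ae_ae_comm (p := fun θ ω => 0 ≤ Z θ t ω)
        (measurableSet_le measurable_const (hZmeas t))).1
        (ae_of_all _ fun θ => (hZY θ t).mono fun _ h => h.1)
  refine (ofReal_one_sub_le_measure_compl hδ0.le hville).trans (measure_mono_ae ?_)
  filter_upwards [hsec] with ω hω hsmall t ρ _ hρν hne hlog hllr
  exact integral_log_le_integral_llr_add_log hρν (hω t).2 hne (hω t).1 hlog hllr
    (not_le.1 fun h => hsmall ⟨t, h⟩).le
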